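/- In the learning model with parameters N, K, γ, m, let 0 ≤ β ≤ γ and 0 < δ ≤ 1. With probability at least 1 − δ over the random draw of the m training examples, the number of relevant features included in M_β (relevant features that agree with the class label on at least a 1/2 + β fraction of the m training examples) is at least K − 4·K·exp(−2·(γ−β)²·m) − 3·ln(1/δ). -/

import Mathlib

/-!
For each relevant feature, its `m` agreement indicators are independent with mean `1/2 + γ`, so by
Hoeffding's inequality it misses the threshold `(1/2 + β) m` with probability at most
`q = exp (-2 (γ - β)² m)`. Distinct features depend on disjoint blocks of the independent family,
so the number of misses is a sum of `K` independent indicators of mean at most `q`. A Chernoff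
bound at `θ = 1` gives `P(misses ≥ a) ≤ exp ((e - 1) K q - a)`, and with `a = 4 K q + 3 ln (1/δ)`
this is at most `δ`.
-/

open MeasureTheory ProbabilityTheory

lemma ProbabilityTheory.iIndepFun.curry {Ω ι κ 𝓧 : Type*} [MeasurableSpace Ω]
    [MeasurableSpace 𝓧] {μ : Measure Ω} {X : ι × κ → Ω → 𝓧} (hX : ∀ p, Measurable (X p))
    (h : iIndepFun X μ) :
    iIndepFun (fun i ω j ↦ X (i, j) ω) μ := by
  have := h.isProbabilityMeasure
  have hrow : ∀ i, iIndepFun (fun j ↦ X (i, j)) μ :=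
    fun i ↦ h.precomp (g := Prod.mk i) (Prod.mk_right_injective i)
  have : ∀ p, IsProbabilityMeasure (μ.map (X p)) :=
    fun p ↦ Measure.isProbabilityMeasure_map (hX p).aemeasurable
  rw [iIndepFun_iff_map_fun_eq_infinitePi_map (by fun_prop)]
  have hcurry : (fun ω i j ↦ X (i, j) ω) =
      MeasurableEquiv.curry ι κ 𝓧 ∘ (fun ω p ↦ X p ω) := rfl
  rw [hcurry, ← Measure.map_map (by fun_prop) (by fun_prop),
    (iIndepFun_iff_map_fun_eq_infinitePi_map hX).1 h,
    Measure.infinitePi_map_curry (fun i j ↦ μ.map (X (i, j)))]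
  congr with i : 1
  exact ((iIndepFun_iff_map_fun_eq_infinitePi_map (fun j ↦ hX (i, j))).1 (hrow i)).symm

lemma integral_eq_measureReal_of_eq_zero_or_eq_one {Ω : Type*} [MeasurableSpace Ω]
    {μ : Measure Ω} {F : Ω → ℝ} (hF : Measurable F) (h01 : ∀ ω, F ω = 0 ∨ F ω = 1) :
    μ[F] = μ.real {ω | F ω = 1} := by
  have hind : F = {ω | F ω = 1}.indicator 1 := by
    ext ω
    rcases h01 ω with h | h <;> simp [h]
  conv_lhs => rw [hind]
  exact integral_indicator_one (hF (measurableSet_singleton 1))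

lemma measureReal_sum_le_sum_integral_sub_le_exp {Ω ι : Type*} [MeasurableSpace Ω]
    {μ : Measure Ω} [IsProbabilityMeasure μ] [Fintype ι] {R : ι → Ω → ℝ}
    (hmeas : ∀ i, Measurable (R i)) (hindep : iIndepFun R μ) (hR : ∀ i ω, R i ω ∈ Set.Icc 0 1)
    {t : ℝ} (ht : 0 ≤ t) :
    μ.real {ω | ∑ i, R i ω ≤ ∑ i, μ[R i] - t} ≤ Real.exp (-2 * t ^ 2 / Fintype.card ι) := by
  have hsubG : ∀ i ∈ Finset.univ,
      HasSubgaussianMGF (fun ω ↦ μ[R i] - R i ω) ((‖(1 : ℝ) - 0‖₊ / 2) ^ 2) μ := fun i _ ↦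
    (hasSubgaussianMGF_of_mem_Icc (hmeas i).aemeasurable (ae_of_all _ (hR i))).neg.congr
      (ae_of_all _ fun ω ↦ by simp)
  have hindep_centered : iIndepFun (fun i ω ↦ μ[R i] - R i ω) μ :=
    hindep.comp (fun i (y : ℝ) ↦ ∫ x, R i x ∂μ - y) fun _ ↦ measurable_const.sub measurable_id
  have h := HasSubgaussianMGF.measure_sum_ge_le_of_iIndepFun hindep_centered hsubG ht
  convert h using 2
  · ext ω
    simp only [Set.mem_ofPred_eq, Finset.sum_sub_distrib, le_sub_comm]
  · simp only [sub_zero, nnnorm_one, one_div, inv_pow, Finset.sum_const, Finset.card_univ,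
      nsmul_eq_mul, NNReal.coe_mul, NNReal.coe_natCast, NNReal.coe_inv, NNReal.coe_pow,
      NNReal.coe_ofNat]
    ring

lemma measureReal_sum_lt_mul_card_le_exp {Ω ι : Type*} [MeasurableSpace Ω] {μ : Measure Ω}
    [IsProbabilityMeasure μ] [Fintype ι] {R : ι → Ω → ℝ} (hmeas : ∀ i, Measurable (R i))
    (hindep : iIndepFun R μ) (hR : ∀ i ω, R i ω ∈ Set.Icc 0 1) {p s : ℝ}
    (hmean : ∀ i, μ[R i] = p) (hs : s ≤ p) :
    μ.real {ω | ∑ i, R i ω < s * Fintype.card ι} ≤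
      Real.exp (-2 * (p - s) ^ 2 * Fintype.card ι) := by
  have hsub : {ω | ∑ i, R i ω < s * Fintype.card ι} ⊆
      {ω | ∑ i, R i ω ≤ ∑ i, μ[R i] - (p - s) * Fintype.card ι} := by
    intro ω hω
    simp only [hmean, Finset.sum_const, Finset.card_univ, nsmul_eq_mul, Set.mem_ofPred_eq] at hω ⊢
    linarith
  calc μ.real {ω | ∑ i, R i ω < s * Fintype.card ι}
      ≤ Real.exp (-2 * ((p - s) * Fintype.card ι) ^ 2 / Fintype.card ι) :=
        (measureReal_mono hsub).trans (measureReal_sum_le_sum_integral_sub_le_exp hmeas hindep hR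
          (mul_nonneg (sub_nonneg.2 hs) (Nat.cast_nonneg _)))
    _ = Real.exp (-2 * (p - s) ^ 2 * Fintype.card ι) := by
        rcases (Nat.cast_nonneg (α := ℝ) (Fintype.card ι)).eq_or_lt with h | h
        · simp [← h]
        · field_simp

lemma mgf_one_le_of_eq_zero_or_eq_one {Ω : Type*} [MeasurableSpace Ω] {μ : Measure Ω}
    [IsProbabilityMeasure μ] {F : Ω → ℝ} (hF : Measurable F) (h01 : ∀ ω, F ω = 0 ∨ F ω = 1)
    {q : ℝ} (hq : μ[F] ≤ q) :
    mgf F μ 1 ≤ Real.exp ((Real.exp 1 - 1) * q) := by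
  have hexp : (fun ω ↦ Real.exp (1 * F ω)) = fun ω ↦ 1 + (Real.exp 1 - 1) * F ω := by
    ext ω
    rcases h01 ω with h | h <;> simp [h]
  have hint : Integrable F μ :=
    .of_bound hF.aestronglyMeasurable 1
      (ae_of_all _ fun ω ↦ by rcases h01 ω with h | h <;> simp [h])
  have he : 0 ≤ Real.exp 1 - 1 := by linarith [Real.add_one_le_exp 1]
  calc mgf F μ 1 = 1 + (Real.exp 1 - 1) * μ[F] := by
        rw [mgf, hexp, integral_add (integrable_const _) (hint.const_mul _), integral_const_mul]
        simp
    _ ≤ 1 + (Real.exp 1 - 1) * q := by gcongr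
    _ ≤ Real.exp ((Real.exp 1 - 1) * q) := by
        linarith [Real.add_one_le_exp ((Real.exp 1 - 1) * q)]

lemma measureReal_le_sum_le_exp_of_eq_zero_or_eq_one {Ω ι : Type*} [MeasurableSpace Ω]
    {μ : Measure Ω} [IsProbabilityMeasure μ] [Fintype ι] {F : ι → Ω → ℝ}
    (hmeas : ∀ i, Measurable (F i)) (hindep : iIndepFun F μ) (h01 : ∀ i ω, F i ω = 0 ∨ F i ω = 1)
    {q : ℝ} (hq : ∀ i, μ[F i] ≤ q) (a : ℝ) :
    μ.real {ω | a ≤ ∑ i, F i ω} ≤ Real.exp ((Real.exp 1 - 1) * Fintype.card ι * q - a) := by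
  have hint : Integrable (fun ω ↦ Real.exp (1 * (∑ i, F i) ω)) μ :=
    hindep.integrable_exp_mul_sum hmeas fun i _ ↦
      .of_bound (by fun_prop) (Real.exp 1) (ae_of_all _ fun ω ↦ by
        rcases h01 i ω with h | h <;> simp [h])
  calc μ.real {ω | a ≤ ∑ i, F i ω}
      ≤ Real.exp (-1 * a) * mgf (∑ i, F i) μ 1 := by
        simpa only [Finset.sum_apply] using measure_ge_le_exp_mul_mgf a zero_le_one hint
    _ = Real.exp (-1 * a) * ∏ i, mgf (F i) μ 1 := by rw [hindep.mgf_sum hmeas]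
    _ ≤ Real.exp (-1 * a) * ∏ _i : ι, Real.exp ((Real.exp 1 - 1) * q) := by
        gcongr with i
        · exact fun i _ ↦ mgf_nonneg
        · exact mgf_one_le_of_eq_zero_or_eq_one (hmeas i) (h01 i) (hq i)
    _ = Real.exp ((Real.exp 1 - 1) * Fintype.card ι * q - a) := by
        rw [Finset.prod_const, ← Real.exp_nat_mul, ← Real.exp_add, Finset.card_univ]
        ring_nf

lemma card_filter_notMem_eq_sub_sum_indicator {ι α : Type*} [Fintype ι] (A : ι → Set α) (x : α)
    [DecidablePred fun i ↦ x ∉ A i] :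
    ((Finset.univ.filter fun i ↦ x ∉ A i).card : ℝ) =
      Fintype.card ι - ∑ i, (A i).indicator 1 x := by
  classical
  have hsplit := Finset.card_filter_add_card_filter_not (s := Finset.univ) fun i ↦ x ∉ A i
  simp only [not_not, Finset.card_univ] at hsplit
  simp only [Set.indicator_apply, Pi.one_apply, Finset.sum_boole]
  rw [eq_sub_iff_add_eq]
  exact_mod_cast hsplit

lemma exp_mul_sub_four_mul_add_three_log_le {n q δ : ℝ} (hn : 0 ≤ n) (hq : 0 ≤ q)
    (hδ0 : 0 < δ) (hδ1 : δ ≤ 1) :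
    Real.exp ((Real.exp 1 - 1) * n * q - (4 * n * q + 3 * Real.log (1 / δ))) ≤ δ := by
  have hL : 0 ≤ Real.log (1 / δ) := Real.log_nonneg (one_le_one_div hδ0 hδ1)
  have hnq : 0 ≤ n * q := mul_nonneg hn hq
  calc Real.exp ((Real.exp 1 - 1) * n * q - (4 * n * q + 3 * Real.log (1 / δ)))
      ≤ Real.exp (-Real.log (1 / δ)) := by
        gcongr
        nlinarith [Real.exp_one_lt_d9]
    _ = δ := by simp [Real.exp_log hδ0]

lemma ofReal_one_sub_le_measure_of_compl_subset {Ω : Type*} [MeasurableSpace Ω] {μ : Measure Ω}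
    [IsProbabilityMeasure μ] {s t : Set Ω} (hst : sᶜ ⊆ t) {δ : ℝ} (ht : μ.real t ≤ δ) :
    ENNReal.ofReal (1 - δ) ≤ μ s := by
  have hcover : 1 ≤ μ.real s + μ.real t := calc
    1 = μ.real (s ∪ sᶜ) := by simp
    _ ≤ μ.real (s ∪ t) := measureReal_mono (Set.union_subset_union_right s hst)
    _ ≤ μ.real s + μ.real t := measureReal_union_le s t
  rw [← ofReal_measureReal]
  exact ENNReal.ofReal_le_ofReal (by linarith)

theorem many_relevant_features_general
    {Ω : Type*} [MeasurableSpace Ω] (μ : Measure Ω) [IsProbabilityMeasure μ]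
    (K m : ℕ) (γ β δ : ℝ)
    (hβ0 : 0 ≤ β) (hβγ : β ≤ γ) (hδ0 : 0 < δ) (hδ1 : δ ≤ 1)
    (W : Fin K × Fin m → Ω → ℝ)
    (hmeas : ∀ p, Measurable (W p))
    (hindep : iIndepFun W μ)
    (h01 : ∀ p ω, W p ω = 0 ∨ W p ω = 1)
    (hp : ∀ p, μ {ω | W p ω = 1} = ENNReal.ofReal (1 / 2 + γ)) :
    ENNReal.ofReal (1 - δ) ≤
      μ {ω | (K : ℝ) - 4 * K * Real.exp (-2 * (γ - β) ^ 2 * m) - 3 * Real.log (1 / δ)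
          ≤ ((Finset.univ.filter (fun j : Fin K =>
            (1 / 2 + β) * m ≤ ∑ t : Fin m, W (j, t) ω)).card : ℝ)} := by
  set q := Real.exp (-2 * (γ - β) ^ 2 * m)
  -- `F j` indicates that the `j`-th relevant feature is left out of `M_β`.
  set F : Fin K → Ω → ℝ := fun j ↦ {ω | ∑ t, W (j, t) ω < (1 / 2 + β) * m}.indicator 1
  have hmeasF : ∀ j, Measurable (F j) := fun j ↦
    measurable_const.indicator (measurableSet_lt (by fun_prop) measurable_const)
  have hmean : ∀ p, μ[W p] = 1 / 2 + γ := fun p ↦ by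
    rw [integral_eq_measureReal_of_eq_zero_or_eq_one (hmeas p) (h01 p), measureReal_def, hp p,
      ENNReal.toReal_ofReal (by linarith)]
  have hfail : ∀ j, μ[F j] ≤ q := fun j ↦ by
    rw [integral_indicator_one (measurableSet_lt (by fun_prop) measurable_const)]
    have h := measureReal_sum_lt_mul_card_le_exp (fun t ↦ hmeas (j, t))
      (hindep.precomp (Prod.mk_right_injective j))
      (fun t ω ↦ by rcases h01 (j, t) ω with h | h <;> simp [h])
      (fun t ↦ hmean (j, t)) (by linarith : 1 / 2 + β ≤ 1 / 2 + γ)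
    rwa [Fintype.card_fin, add_sub_add_left_eq_sub] at h
  have hindepF : iIndepFun F μ :=
    (hindep.curry hmeas).comp
      (fun _ ↦ {v : Fin m → ℝ | ∑ t, v t < (1 / 2 + β) * m}.indicator 1)
      fun _ ↦ measurable_const.indicator (measurableSet_lt (by fun_prop) measurable_const)
  have htail := measureReal_le_sum_le_exp_of_eq_zero_or_eq_one hmeasF hindepF
    (fun j ω ↦ by simp only [F, Set.indicator_apply]; split_ifs <;> simp) hfail
    (4 * K * q + 3 * Real.log (1 / δ))
  rw [Fintype.card_fin] at htail
  refine ofReal_one_sub_le_measure_of_compl_subset ?_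
    (htail.trans (exp_mul_sub_four_mul_add_three_log_le (by positivity) (by positivity) hδ0 hδ1))
  intro ω hω
  have hcount := card_filter_notMem_eq_sub_sum_indicator
    (fun j ↦ {ω | ∑ t, W (j, t) ω < (1 / 2 + β) * m}) ω
  simp only [Set.mem_compl_iff, Set.mem_ofPred_eq, not_lt, Fintype.card_fin] at hω hcount ⊢
  rw [hcount] at hω
  linarith

/-- **Lemma 5 (many relevant features).** In the learning model with parameters `N, K, γ, m`,
let `W (j, t)` be the indicator that the `j`-th relevant feature agrees with the class label on
the `t`-th training example; these `K·m` indicators are jointly independent, each equal to `1`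
with probability `1/2 + γ`. For `0 ≤ β ≤ γ` and `0 < δ ≤ 1`, with probability at least `1 − δ`
the number of relevant features included in `M_β` (those agreeing with the label on at least a
`1/2 + β` fraction of the `m` training examples) is at least
`K − 4·K·exp(−2·(γ−β)²·m) − 3·ln(1/δ)`. -/
theorem many_relevant_features
    {Ω : Type*} [MeasurableSpace Ω] (μ : Measure Ω) [IsProbabilityMeasure μ]
    (N K m : ℕ) (hKN : K ≤ N) (γ β δ : ℝ)
    (hβ0 : 0 ≤ β) (hβγ : β ≤ γ) (hγ : γ ≤ 1 / 2) (hδ0 : 0 < δ) (hδ1 : δ ≤ 1)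
    (W : Fin K × Fin m → Ω → ℝ)
    (hmeas : ∀ p, Measurable (W p))
    (hindep : iIndepFun W μ)
    (h01 : ∀ p ω, W p ω = 0 ∨ W p ω = 1)
    (hp : ∀ p, μ {ω | W p ω = 1} = ENNReal.ofReal (1 / 2 + γ)) :
    ENNReal.ofReal (1 - δ) ≤
      μ {ω | (K : ℝ) - 4 * K * Real.exp (-2 * (γ - β) ^ 2 * m) - 3 * Real.log (1 / δ)
          ≤ ((Finset.univ.filter (fun j : Fin K =>
            (1 / 2 + β) * m ≤ ∑ t : Fin m, W (j, t) ω)).card : ℝ)} :=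
  many_relevant_features_general μ K m γ β δ hβ0 hβγ hδ0 hδ1 W hmeas hindep h01 hp
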